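/- Let t be a rooted tree with pairwise distinct leaf labels in which every internal vertex has at least two children, let S be a set of labels, and let a be a leaf label of t with a ∉ S. Let Φ(S) denote the number of vertices of t that are incomplete with respect to S, and let k denote the number of vertices that are complete with respect to S ∪ {a} but not complete with respect to S. Then k ≥ 1 and Φ(S ∪ {a}) ≤ Φ(S) − k + 2; i.e., inserting one leaf decreases the number of incomplete vertices by at least k − 2 (the potential-method bound giving amortized constant time per leaf insertion). -/

import Mathlib

/-!
The vertices whose subtree contains `a` form the path from the root to the leaf `a`; every other
vertex keeps its counter when `a` is inserted. A vertex is complete only if all its children are,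
so the vertices that become complete are the lowest `k` vertices of that path. Each of them other
than the leaf has a sibling subtree of its path child, which is complete and has a leaf, so it was
incomplete before and is not afterwards; only the parent of the highest of them can become newly
incomplete. Induction along the path proves the sharper bound `Φ(S ∪ {a}) + k ≤ Φ(S) + 1` at
vertices that become complete, and `Φ(S ∪ {a}) + k ≤ Φ(S) + 2` at all others.
-/

inductive RTree (α : Type*) where
  | leaf (a : α)
  | node (children : List (RTree α))

namespace RTree

variable {α : Type*} [DecidableEq α]

def leafList : RTree α → List α
  | leaf a => [a]
  | node cs => (cs.attach.map fun ⟨w, _⟩ => leafList w).flatten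
decreasing_by have := List.sizeOf_lt_of_mem ‹_›; simp only [node.sizeOf_spec]; omega

def L (v : RTree α) : Finset α := (leafList v).toFinset

def counter (S : Finset α) : RTree α → ℕ
  | leaf a => if a ∈ S then 1 else 0
  | node cs =>
      (cs.attach.map fun ⟨w, _⟩ =>
        if counter S w = (L w).card then counter S w else 0).sum
decreasing_by have := List.sizeOf_lt_of_mem ‹_›; simp only [node.sizeOf_spec]; omega

/-- Vertices are identified with the subtrees rooted at them. -/
inductive IsVertex : RTree α → RTree α → Prop
  | refl (t : RTree α) : IsVertex t t
  | child {v w : RTree α} {cs : List (RTree α)} : w ∈ cs → IsVertex v w → IsVertex v (node cs)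

def vertexList : RTree α → List (RTree α)
  | leaf a => [leaf a]
  | node cs => node cs :: (cs.attach.map fun ⟨w, _⟩ => vertexList w).flatten
decreasing_by have := List.sizeOf_lt_of_mem ‹_›; simp only [node.sizeOf_spec]; omega


/-- The potential `Φ(S)`. -/
def phi (S : Finset α) (t : RTree α) : ℕ :=
  ((vertexList t).filter fun v =>
    decide (0 < counter S v) && decide (counter S v < (L v).card)).length

/-- The quantity `k`. -/
def newlyComplete (S : Finset α) (a : α) (t : RTree α) : ℕ :=
  ((vertexList t).filter fun v =>
    decide (counter (insert a S) v = (L v).card) &&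
      !decide (counter S v = (L v).card)).length

end RTree

namespace RTree

section

variable {α : Type*}

@[elab_as_elim, induction_eliminator]
theorem induction {motive : RTree α → Prop} (leaf : ∀ a, motive (RTree.leaf a))
    (node : ∀ cs, (∀ w ∈ cs, motive w) → motive (RTree.node cs)) (t : RTree α) : motive t :=
  match t with
  | .leaf a => leaf a
  | .node cs => node cs fun w _ => induction leaf node w
termination_by t
decreasing_by have := List.sizeOf_lt_of_mem ‹_›; simp only [RTree.node.sizeOf_spec]; omega

@[simp]
lemma leafList_leaf (a : α) : leafList (leaf a) = [a] := by
  rw [leafList]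

lemma leafList_node (cs : List (RTree α)) : leafList (node cs) = (cs.map leafList).flatten := by
  simp [leafList]

lemma mem_leafList_node {a : α} {cs : List (RTree α)} :
    a ∈ leafList (node cs) ↔ ∃ w ∈ cs, a ∈ leafList w := by
  simp [leafList_node]

lemma nodup_leafList_of_mem {w : RTree α} {cs : List (RTree α)} (hw : w ∈ cs)
    (h : (leafList (node cs)).Nodup) : (leafList w).Nodup := by
  rw [leafList_node] at h
  exact (List.nodup_flatten.1 h).1 _ (List.mem_map_of_mem hw)

lemma exists_mem_leafList {t : RTree α} (hne : ∀ cs, IsVertex (node cs) t → cs ≠ []) :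
    ∃ a, a ∈ leafList t := by
  induction t with
  | leaf a => exact ⟨a, by simp⟩
  | node cs ih =>
    obtain ⟨w, hw⟩ := List.exists_mem_of_ne_nil cs (hne cs (.refl _))
    obtain ⟨a, ha⟩ := ih w hw fun cs' h => hne cs' (.child hw h)
    exact ⟨a, mem_leafList_node.2 ⟨w, hw, ha⟩⟩

lemma exists_perm_cons_of_mem_leafList {a : α} {cs : List (RTree α)}
    (hnd : (leafList (node cs)).Nodup) (ha : a ∈ leafList (node cs)) :
    ∃ u rest, cs.Perm (u :: rest) ∧ a ∈ leafList u ∧ ∀ w ∈ rest, a ∉ leafList w := by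
  obtain ⟨u, hu, hau⟩ := mem_leafList_node.1 ha
  obtain ⟨l₁, l₂, rfl⟩ := List.append_of_mem hu
  refine ⟨u, l₁ ++ l₂, List.perm_middle, hau, fun w hw haw => ?_⟩
  rw [leafList_node, ((List.perm_middle.map leafList).flatten).nodup_iff] at hnd
  simp only [List.map_cons, List.flatten_cons] at hnd
  exact List.disjoint_of_nodup_append hnd hau (List.mem_flatten.2 ⟨_, List.mem_map_of_mem hw, haw⟩)

@[simp]
lemma vertexList_leaf (a : α) : vertexList (leaf a) = [leaf a] := by
  rw [vertexList]

lemma vertexList_node (cs : List (RTree α)) :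
    vertexList (node cs) = node cs :: (cs.map vertexList).flatten := by
  simp [vertexList]

lemma leaf_mem_vertexList {a : α} {t : RTree α} (ha : a ∈ leafList t) :
    leaf a ∈ vertexList t := by
  induction t with
  | leaf b => simp_all
  | node cs ih =>
    obtain ⟨w, hw, haw⟩ := mem_leafList_node.1 ha
    rw [vertexList_node]
    exact List.mem_cons_of_mem _ (List.mem_flatten.2 ⟨_, List.mem_map_of_mem hw, ih w hw haw⟩)

lemma leafList_subset_of_mem_vertexList {v t : RTree α} (hv : v ∈ vertexList t) :
    leafList v ⊆ leafList t := by
  induction t with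
  | leaf b => simp_all
  | node cs ih =>
    rw [vertexList_node, List.mem_cons] at hv
    obtain rfl | hv := hv
    · exact List.Subset.refl _
    obtain ⟨w, hw, hvw⟩ : ∃ w ∈ cs, v ∈ vertexList w := by simpa using hv
    exact fun b hb => mem_leafList_node.2 ⟨w, hw, ih w hw hvw hb⟩

lemma countP_vertexList_node (p : RTree α → Bool) (cs : List (RTree α)) :
    (vertexList (node cs)).countP p
      = (if p (node cs) then 1 else 0) + (cs.map fun w => (vertexList w).countP p).sum := by
  rw [vertexList_node, List.countP_cons, List.countP_flatten, List.map_map, add_comm]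
  rfl

end

variable {α : Type*} [DecidableEq α]

lemma card_L_of_nodup {t : RTree α} (h : (leafList t).Nodup) : (L t).card = (leafList t).length :=
  List.toFinset_card_of_nodup h

lemma card_L_node {cs : List (RTree α)} (h : (leafList (node cs)).Nodup) :
    (L (node cs)).card = (cs.map fun w => (L w).card).sum := by
  rw [card_L_of_nodup h, leafList_node, List.length_flatten, List.map_map]
  exact congrArg List.sum <| List.map_congr_left fun w hw =>
    (card_L_of_nodup (nodup_leafList_of_mem hw h)).symm

lemma card_L_pos_of_mem {a : α} {t : RTree α} (ha : a ∈ leafList t) : 0 < (L t).card :=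
  Finset.card_pos.2 ⟨a, List.mem_toFinset.2 ha⟩

def contribution (S : Finset α) (w : RTree α) : ℕ :=
  if counter S w = (L w).card then counter S w else 0

lemma counter_leaf (S : Finset α) (b : α) : counter S (leaf b) = if b ∈ S then 1 else 0 := by
  rw [counter]

lemma counter_node (S : Finset α) (cs : List (RTree α)) :
    counter S (node cs) = (cs.map (contribution S)).sum := by
  simp only [counter, List.map_subtype, List.unattach_attach]
  rfl

lemma contribution_le (S : Finset α) (w : RTree α) : contribution S w ≤ (L w).card := by
  unfold contribution
  split <;> omega

lemma contribution_eq_ite (S : Finset α) (w : RTree α) :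
    contribution S w = if counter S w = (L w).card then (L w).card else 0 := by
  unfold contribution
  split_ifs with h <;> simp [h]

lemma contribution_eq_zero_of_lt {S : Finset α} {w : RTree α} (h : counter S w < (L w).card) :
    contribution S w = 0 :=
  if_neg h.ne

lemma counter_lt_card_of_mem {S : Finset α} {a : α} (haS : a ∉ S) {t : RTree α}
    (hnd : (leafList t).Nodup) (ha : a ∈ leafList t) : counter S t < (L t).card := by
  induction t with
  | leaf b =>
    obtain rfl : a = b := by simpa using ha
    simp [counter_leaf, haS, L]
  | node cs ih =>
    obtain ⟨u, hu, hau⟩ := mem_leafList_node.1 ha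
    rw [counter_node, card_L_node hnd]
    refine List.sum_lt_sum _ _ (fun w _ => contribution_le S w) ⟨u, hu, ?_⟩
    rw [contribution_eq_zero_of_lt (ih u hu (nodup_leafList_of_mem hu hnd) hau)]
    exact card_L_pos_of_mem hau

lemma counter_insert_of_not_mem {a : α} (S : Finset α) {t : RTree α} (h : a ∉ leafList t) :
    counter (insert a S) t = counter S t := by
  induction t with
  | leaf b =>
    have hab : b ≠ a := by simpa [eq_comm] using h
    simp [counter_leaf, hab]
  | node cs ih =>
    rw [counter_node, counter_node]
    refine congrArg List.sum (List.map_congr_left fun w hw => ?_)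
    rw [contribution, contribution, ih w hw fun haw => h (mem_leafList_node.2 ⟨w, hw, haw⟩)]

lemma contribution_insert_of_not_mem {a : α} (S : Finset α) {w : RTree α}
    (h : a ∉ leafList w) : contribution (insert a S) w = contribution S w := by
  rw [contribution, contribution, counter_insert_of_not_mem S h]

lemma phi_node (S : Finset α) (cs : List (RTree α)) :
    phi S (node cs)
      = (if 0 < counter S (node cs) ∧ counter S (node cs) < (L (node cs)).card then 1 else 0)
        + (cs.map (phi S)).sum := by
  rw [phi, ← List.countP_eq_length_filter, countP_vertexList_node]
  simp only [Bool.and_eq_true, decide_eq_true_eq, List.countP_eq_length_filter,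
    Nat.add_left_cancel_iff]
  rfl

lemma newlyComplete_node (S : Finset α) (a : α) (cs : List (RTree α)) :
    newlyComplete S a (node cs)
      = (if counter (insert a S) (node cs) = (L (node cs)).card
            ∧ counter S (node cs) ≠ (L (node cs)).card then 1 else 0)
        + (cs.map (newlyComplete S a)).sum := by
  rw [newlyComplete, ← List.countP_eq_length_filter, countP_vertexList_node]
  simp only [Bool.and_eq_true, decide_eq_true_eq, Bool.not_eq_eq_eq_not, Bool.not_true,
    decide_eq_false_iff_not, List.countP_eq_length_filter, ne_eq, Nat.add_left_cancel_iff]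
  rfl

lemma phi_insert_of_not_mem {a : α} (S : Finset α) {t : RTree α} (h : a ∉ leafList t) :
    phi (insert a S) t = phi S t := by
  unfold phi
  congr 1
  refine List.filter_congr fun v hv => ?_
  rw [counter_insert_of_not_mem S fun hav => h (leafList_subset_of_mem_vertexList hv hav)]

lemma newlyComplete_eq_zero_of_not_mem {a : α} (S : Finset α) {t : RTree α}
    (h : a ∉ leafList t) : newlyComplete S a t = 0 := by
  rw [newlyComplete, List.length_eq_zero_iff, List.filter_eq_nil_iff]
  intro v hv
  simp [counter_insert_of_not_mem S fun hav => h (leafList_subset_of_mem_vertexList hv hav)]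

lemma one_le_newlyComplete {S : Finset α} {a : α} (haS : a ∉ S) {t : RTree α}
    (ha : a ∈ leafList t) : 1 ≤ newlyComplete S a t :=
  List.length_pos_of_mem <| List.mem_filter.2
    ⟨leaf_mem_vertexList ha, by simp [counter_leaf, haS, L]⟩

lemma one_le_sum_card_L_of_perm {u : RTree α} {cs rest : List (RTree α)}
    (hperm : cs.Perm (u :: rest)) (hbr : ∀ cs', IsVertex (node cs') (node cs) → 2 ≤ cs'.length) :
    1 ≤ (rest.map fun w => (L w).card).sum := by
  obtain ⟨w, hw⟩ : ∃ w, w ∈ rest := List.exists_mem_of_length_pos (by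
    have hlen := hperm.length_eq
    have := hbr cs (.refl _)
    rw [List.length_cons] at hlen
    omega)
  have hwcs : w ∈ cs := hperm.symm.subset (List.mem_cons_of_mem _ hw)
  obtain ⟨b, hb⟩ := exists_mem_leafList fun cs' h =>
    List.ne_nil_of_length_pos (by have := hbr cs' (.child hwcs h); omega)
  exact (card_L_pos_of_mem hb).trans_le (List.le_sum_of_mem (List.mem_map_of_mem hw))

theorem phi_insert_add_newlyComplete_le {S : Finset α} {a : α} (haS : a ∉ S) {t : RTree α}
    (hnd : (leafList t).Nodup) (hbr : ∀ cs, IsVertex (node cs) t → 2 ≤ cs.length)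
    (ha : a ∈ leafList t) :
    phi (insert a S) t + newlyComplete S a t
        + (if counter (insert a S) t = (L t).card then 1 else 0) ≤ phi S t + 2 := by
  induction t with
  | leaf b =>
    obtain rfl : a = b := by simpa using ha
    simp [phi, newlyComplete, counter_leaf, haS, L]
  | node cs ih =>
    obtain ⟨u, rest, hperm, hau, hrest⟩ := exists_perm_cons_of_mem_leafList hnd ha
    have hu : u ∈ cs := hperm.symm.subset List.mem_cons_self
    have hndu := nodup_leafList_of_mem hu hnd
    have ihu := ih u hu hndu (fun cs' h => hbr cs' (.child hu h)) hau
    have hsplit (f : RTree α → ℕ) : (cs.map f).sum = f u + (rest.map f).sum := by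
      simpa using (hperm.map f).sum_eq
    have hcontr : (rest.map (contribution (insert a S))).sum = (rest.map (contribution S)).sum :=
      congrArg List.sum <| List.map_congr_left fun w hw =>
        contribution_insert_of_not_mem S (hrest w hw)
    have hphi : (rest.map (phi (insert a S))).sum = (rest.map (phi S)).sum :=
      congrArg List.sum <| List.map_congr_left fun w hw => phi_insert_of_not_mem S (hrest w hw)
    have hnew : (rest.map (newlyComplete S a)).sum = 0 :=
      List.sum_eq_zero fun n hn => by
        obtain ⟨w, hw, rfl⟩ := List.mem_map.1 hn
        exact newlyComplete_eq_zero_of_not_mem S (hrest w hw)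
    have hcontr_le : (rest.map (contribution S)).sum ≤ (rest.map fun w => (L w).card).sum :=
      List.sum_le_sum fun w _ => contribution_le S w
    have hrest_pos := one_le_sum_card_L_of_perm hperm hbr
    have hu_contr : contribution S u = 0 :=
      contribution_eq_zero_of_lt (counter_lt_card_of_mem haS hndu hau)
    have hu_pos := card_L_pos_of_mem hau
    simp only [phi_node, newlyComplete_node, counter_node, card_L_node hnd, hsplit, hcontr,
      hphi, hnew, hu_contr, contribution_eq_ite (insert a S) u]
    split_ifs at * <;> omega

/-- in a tree whose internal vertices all have at least two children, for a leaf
label `a ∉ S`, with `k` the number of vertices complete w.r.t. `S ∪ {a}` but not w.r.t. `S`,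
we have `k ≥ 1` and `Φ(S ∪ {a}) ≤ Φ(S) − k + 2` (stated additively in `ℕ`). -/
theorem potential_bound (t : RTree α) (hnd : t.leafList.Nodup)
    (hbr : ∀ cs : List (RTree α), IsVertex (node cs) t → 2 ≤ cs.length)
    (S : Finset α) (a : α) (ha : a ∈ leafList t) (haS : a ∉ S) :
    1 ≤ newlyComplete S a t ∧
      phi (insert a S) t + newlyComplete S a t ≤ phi S t + 2 := by
  refine ⟨one_le_newlyComplete haS ha, ?_⟩
  have := phi_insert_add_newlyComplete_le haS hnd hbr ha
  omega

end RTree
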